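/- Mixture β-mixing bound for the lower-bound construction: fix n ≥ 1, K ≥ 1, b ∈ [0,1], and let the law of Z ∈ Z^{n+1} be the mixture (b/4)·P_cyclic + (1−b/4)·Q^{n+1}, where Q is uniform on K distinct points z_0,...,z_{K−1} and P_cyclic draws J_1 uniform on {0,...,K−1}, sets J_{i+1} = (J_i + 1) mod K, and returns (z_{J_1},...,z_{J_{n+1}}). Then Z is stationary, and its β-mixing coefficients satisfy β(τ) ≤ 1 − (1 − b/4)^2 ≤ b/2 for all τ ≥ 0. -/

import Mathlib

open MeasureTheory
open scoped ENNReal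

/-- The `j`-th order statistic (1-indexed) of a finite real vector. -/
noncomputable def orderStat {m : ℕ} (v : Fin m → ℝ) (j : ℕ) : ℝ :=
  ((List.ofFn v).mergeSort (fun x y => x ≤ y)).getD (j - 1) 0

/-- `Quantile b v` is the `⌈b·m⌉`-th order statistic of `v ∈ ℝ^m`, with the conventions
`Quantile b v = ⊤` if `b > 1` and `Quantile b v = ⊥` if `b ≤ 0`. -/
noncomputable def Quantile {m : ℕ} (b : ℝ) (v : Fin m → ℝ) : EReal :=
  if b > 1 then ⊤ else if b ≤ 0 then ⊥ else ((orderStat v ⌈b * m⌉.toNat : ℝ) : EReal)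

/-- The deletion operator `Δ⁰_{k,τ}` of the paper (with `k` and `τ` counts of entries). -/
def delta0 {α : Type*} (m k τ : ℕ) (w : Fin m → α) : Fin (m - τ) → α :=
  fun i =>
    if i.val < m - τ - k then w ⟨i.val, by have := i.isLt; omega⟩
    else w ⟨i.val + τ, by have := i.isLt; omega⟩

/-- The deletion operator `Δ¹_{k,τ}` of the paper. -/
def delta1 {α : Type*} (m k τ : ℕ) (w : Fin m → α) : Fin (m - τ) → α :=
  fun i =>
    if h : k + τ < m then
      if h2 : i.val < m - τ - k then w ⟨i.val + k + τ, by have := i.isLt; omega⟩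
      else w ⟨i.val - (m - τ - k), by have := i.isLt; omega⟩
    else w ⟨(i.val + k + τ - m) % m, Nat.mod_lt _ (by have := i.isLt; omega)⟩

/-- Total variation distance between the laws of two random elements `U, V` under `P`. -/
noncomputable def dTV {Ω γ : Type*} [MeasurableSpace Ω] [MeasurableSpace γ]
    (P : Measure Ω) (U V : Ω → γ) : ℝ :=
  ⨆ E : {E : Set γ // MeasurableSet E}, |(P (U ⁻¹' E.1)).toReal - (P (V ⁻¹' E.1)).toReal|

/-- The switch coefficient `Ψ_{k,τ}(W)` of a random vector `W` of length `m`. -/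
noncomputable def switchCoef {Ω α : Type*} [MeasurableSpace Ω] [MeasurableSpace α]
    (P : Measure Ω) {m : ℕ} (W : Ω → Fin m → α) (k τ : ℕ) : ℝ :=
  dTV P (fun ω => delta0 m k τ (W ω)) (fun ω => delta1 m k τ (W ω))

/-- The averaged switch coefficient `Ψ̄_τ(W) = (1/m) ∑_{k=1}^m Ψ_{k,τ}(W)`. -/
noncomputable def avgSwitchCoef {Ω α : Type*} [MeasurableSpace Ω] [MeasurableSpace α]
    (P : Measure Ω) {m : ℕ} (W : Ω → Fin m → α) (τ : ℕ) : ℝ :=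
  (∑ k ∈ Finset.Icc 1 m, switchCoef P W k τ) / m

/-- Stationarity of a time series `Z = (Z_1,…,Z_{n+1})`. -/
def Stationary {Ω α : Type*} [MeasurableSpace Ω] [MeasurableSpace α]
    (P : Measure Ω) {n : ℕ} (Z : Ω → Fin (n + 1) → α) : Prop :=
  ∀ (ℓ i : ℕ) (h : i + ℓ ≤ n + 1),
    Measure.map (fun ω (j : Fin ℓ) => Z ω ⟨i + j.val, by have := j.isLt; omega⟩) P =
      Measure.map (fun ω (j : Fin ℓ) => Z ω ⟨j.val, by have := j.isLt; omega⟩) P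

/-- Exchangeability of a random vector. -/
def Exchangeable {Ω α : Type*} [MeasurableSpace Ω] [MeasurableSpace α]
    (P : Measure Ω) {n : ℕ} (Z : Ω → Fin (n + 1) → α) : Prop :=
  ∀ σ : Equiv.Perm (Fin (n + 1)),
    Measure.map (fun ω => Z ω ∘ σ) P = Measure.map Z P

/-- The β-mixing coefficient with lag `τ` of `Z`, defined via an independent copy `Z'`. -/
noncomputable def betaMix {Ω α : Type*} [MeasurableSpace Ω] [MeasurableSpace α]
    (P : Measure Ω) (n : ℕ) (Z Z' : Ω → Fin (n + 1) → α) (τ : ℕ) : ℝ :=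
  ⨆ k : Fin (n - τ),
    dTV P
      (fun ω (i : Fin (n + 1 - τ)) =>
        if i.val < k.val + 1 then Z ω ⟨i.val, by have := i.isLt; omega⟩
        else Z ω ⟨i.val + τ, by have := i.isLt; omega⟩)
      (fun ω (i : Fin (n + 1 - τ)) =>
        if i.val < k.val + 1 then Z ω ⟨i.val, by have := i.isLt; omega⟩
        else Z' ω ⟨i.val + τ, by have := i.isLt; omega⟩)


/-! Both components of `μ` are stationary: a window of an iid vector is iid, and moving a window
of the cyclic path only shifts its uniform starting point. For β-mixing, with `q = 1 - b/4` we
have `q • Q^{n+1} ≤ μ`, hence `q² • Q^{n+1} ⊗ Q^{n+1} ≤ μ ⊗ μ`. Both vectors compared in `β(τ)`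
read pairwise distinct coordinates of the pair `(Z, Z')`, so under `Q^{n+1} ⊗ Q^{n+1}` each is
iid `Q`; their laws therefore share the component `q² • Q^{n+1-τ}`, and two probability measures
sharing a component of mass `q²` are at total variation distance at most `1 - q²`. -/

open Function Set

theorem measurable_comp_right {α ι ι' : Type*} [MeasurableSpace α] (f : ι → ι') :
    Measurable fun w : ι' → α => w ∘ f :=
  measurable_pi_lambda _ fun i => measurable_pi_apply (f i)

theorem measurable_sumElim_comp {α ι ι₁ ι₂ : Type*} [MeasurableSpace α]
    (f : ι → ι₁ ⊕ ι₂) :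
    Measurable fun ω : (ι₁ → α) × (ι₂ → α) => fun i => Sum.elim ω.1 ω.2 (f i) :=
  (measurable_comp_right f).comp (MeasurableEquiv.sumPiEquivProdPi _).symm.measurable

theorem isProbabilityMeasure_smul_add_smul {γ : Type*} [MeasurableSpace γ] {P P' : Measure γ}
    [IsProbabilityMeasure P] [IsProbabilityMeasure P'] {a q : ℝ≥0∞} (h : a + q = 1) :
    IsProbabilityMeasure (a • P + q • P') :=
  ⟨by simpa using h⟩

theorem isProbabilityMeasure_uniform_fin (K : ℕ) [NeZero K] :
    IsProbabilityMeasure ((K : ℝ≥0∞)⁻¹ • Measure.count : Measure (Fin K)) :=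
  ⟨by simp [ENNReal.inv_mul_cancel (NeZero.ne _) (ENNReal.natCast_ne_top K)]⟩

namespace MeasureTheory.Measure

theorem pi_map_comp_of_injective {α ι ι' : Type*} [MeasurableSpace α] [Fintype ι] [Fintype ι']
    (ν : Measure α) [IsProbabilityMeasure ν] {f : ι → ι'} (hf : Injective f) :
    (Measure.pi fun _ : ι' => ν).map (fun w => w ∘ f) = Measure.pi fun _ : ι => ν := by
  classical
  refine (Measure.pi_eq fun s hs => ?_).symm
  have hpre : (fun w : ι' → α => w ∘ f) ⁻¹' univ.pi s
      = univ.pi (Function.extend f s fun _ => univ) := by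
    ext w
    simp only [mem_preimage, mem_univ_pi, comp_apply]
    refine ⟨fun h j => ?_, fun h i => by simpa [hf.extend_apply] using h (f i)⟩
    by_cases hj : ∃ i, f i = j
    · obtain ⟨i, rfl⟩ := hj
      simpa [hf.extend_apply] using h i
    · simp [extend_apply' _ _ _ hj]
  rw [map_apply (measurable_comp_right f) (.univ_pi hs), hpre, pi_pi]
  refine (Fintype.prod_of_injective f hf _ _ (fun j hj => ?_) fun i => ?_).symm
  · simp [extend_apply' _ _ _ hj]
  · simp [hf.extend_apply]

theorem pi_prod_pi_map_sumElim {α ι ι₁ ι₂ : Type*} [MeasurableSpace α] [Fintype ι]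
    [Fintype ι₁] [Fintype ι₂] (ν : Measure α) [IsProbabilityMeasure ν]
    {f : ι → ι₁ ⊕ ι₂} (hf : Injective f) :
    ((Measure.pi fun _ : ι₁ => ν).prod (Measure.pi fun _ : ι₂ => ν)).map
        (fun ω i => Sum.elim ω.1 ω.2 (f i)) = Measure.pi fun _ : ι => ν := by
  have hsum := (measurePreserving_sumPiEquivProdPi_symm
    (X := fun _ : ι₁ ⊕ ι₂ => α) fun _ => ν).map_eq
  rw [← pi_map_comp_of_injective ν hf, ← hsum,
    map_map (measurable_comp_right f) (MeasurableEquiv.measurable _)]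
  rfl

theorem smul_prod_smul_le {α β : Type*} [MeasurableSpace α] [MeasurableSpace β]
    {μ μ' : Measure α} {ν ν' : Measure β} [SFinite ν] [SFinite ν'] {c d : ℝ≥0∞}
    (hμ : c • μ ≤ μ') (hν : d • ν ≤ ν') : (c * d) • μ.prod ν ≤ μ'.prod ν' := by
  rw [mul_smul, ← prod_smul_right, ← prod_smul_left]
  exact prod_mono hμ hν

theorem smul_pi_le_map_sumElim {α ι ι' : Type*} [MeasurableSpace α] [Fintype ι]
    [Fintype ι'] {μ : Measure (ι' → α)} [SFinite μ] {ν : Measure α} [IsProbabilityMeasure ν]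
    {q : ℝ≥0∞} (h : q • Measure.pi (fun _ => ν) ≤ μ) {f : ι → ι' ⊕ ι'} (hf : Injective f) :
    (q * q) • Measure.pi (fun _ => ν)
      ≤ (μ.prod μ).map fun ω i => Sum.elim ω.1 ω.2 (f i) := by
  rw [← pi_prod_pi_map_sumElim ν hf, ← Measure.map_smul]
  exact map_mono (smul_prod_smul_le h h) (measurable_sumElim_comp f)

section SmulLe

variable {γ : Type*} [MeasurableSpace γ] {ν π : Measure γ} [IsProbabilityMeasure ν]
  [IsProbabilityMeasure π] {c : ℝ≥0∞}

theorem le_one_of_smul_le (h : c • π ≤ ν) : c ≤ 1 := by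
  simpa using h univ

theorem toReal_le_one_of_smul_le (h : c • π ≤ ν) : c.toReal ≤ 1 := by
  simpa using ENNReal.toReal_mono ENNReal.one_ne_top (le_one_of_smul_le h)

theorem measureReal_mem_Icc_of_smul_le (h : c • π ≤ ν) {E : Set γ} (hE : MeasurableSet E) :
    c.toReal * π.real E ≤ ν.real E ∧ ν.real E ≤ 1 - c.toReal + c.toReal * π.real E := by
  have hle : ∀ s, c.toReal * π.real s ≤ ν.real s := fun s => by
    simpa [measureReal_def, ENNReal.toReal_mul] using
      ENNReal.toReal_mono (measure_ne_top ν s) (h s)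
  refine ⟨hle E, ?_⟩
  have hcompl := hle Eᶜ
  rw [probReal_compl_eq_one_sub hE, probReal_compl_eq_one_sub hE] at hcompl
  linarith

end SmulLe

end MeasureTheory.Measure

theorem dTV_le_of_smul_le {Ω γ : Type*} [MeasurableSpace Ω] [MeasurableSpace γ]
    {P : Measure Ω} [IsProbabilityMeasure P] {U V : Ω → γ} (hU : Measurable U)
    (hV : Measurable V) {π : Measure γ} [IsProbabilityMeasure π] {c : ℝ≥0∞}
    (hcU : c • π ≤ P.map U) (hcV : c • π ≤ P.map V) : dTV P U V ≤ 1 - c.toReal := by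
  have : IsProbabilityMeasure (P.map U) := Measure.isProbabilityMeasure_map hU.aemeasurable
  have : IsProbabilityMeasure (P.map V) := Measure.isProbabilityMeasure_map hV.aemeasurable
  refine Real.iSup_le (fun ⟨E, hE⟩ => ?_) (by linarith [Measure.toReal_le_one_of_smul_le hcU])
  obtain ⟨hU₁, hU₂⟩ := Measure.measureReal_mem_Icc_of_smul_le hcU hE
  obtain ⟨hV₁, hV₂⟩ := Measure.measureReal_mem_Icc_of_smul_le hcV hE
  rw [map_measureReal_apply hU hE] at hU₁ hU₂
  rw [map_measureReal_apply hV hE] at hV₁ hV₂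
  rw [← measureReal_def, ← measureReal_def, abs_sub_le_iff]
  constructor <;> linarith

namespace Stationary

variable {Ω α : Type*} [MeasurableSpace Ω] [MeasurableSpace α] {n : ℕ}
  {P P' : Measure Ω} {Z : Ω → Fin (n + 1) → α}

theorem add (hZ : Measurable Z) (h : Stationary P Z) (h' : Stationary P' Z) :
    Stationary (P + P') Z := by
  intro ℓ i hi
  have hwindow : ∀ σ : Fin ℓ → Fin (n + 1), Measurable fun ω j => Z ω (σ j) := fun σ =>
    (measurable_comp_right σ).comp hZ
  rw [Measure.map_add _ _ (hwindow _), Measure.map_add _ _ (hwindow _), h ℓ i hi, h' ℓ i hi]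

theorem smul (h : Stationary P Z) (c : ℝ≥0∞) : Stationary (c • P) Z := by
  intro ℓ i hi
  rw [Measure.map_smul, Measure.map_smul, h ℓ i hi]

end Stationary

theorem stationary_pi {α : Type*} [MeasurableSpace α] {n : ℕ} (ν : Measure α)
    [IsProbabilityMeasure ν] : Stationary (Measure.pi fun _ : Fin (n + 1) => ν) id := by
  intro ℓ i hi
  exact (Measure.pi_map_comp_of_injective ν
    (f := fun j : Fin ℓ => (⟨i + j, by omega⟩ : Fin (n + 1)))
    fun j j' h => Fin.ext (Nat.add_left_cancel (Fin.mk.inj h))).trans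
    (Measure.pi_map_comp_of_injective ν (f := fun j : Fin ℓ => (⟨j, by omega⟩ : Fin (n + 1)))
      fun j j' h => Fin.ext (Fin.mk.inj h)).symm

section Cyclic

variable {𝒵 : Type*} {K : ℕ} [NeZero K]

def cyclicPath (z : Fin K → 𝒵) (m : ℕ) (j0 : Fin K) (i : Fin m) : 𝒵 :=
  z ⟨(j0.val + i.val) % K, Nat.mod_lt _ (NeZero.pos K)⟩

theorem cyclicPath_comp_of_val_eq_add (z : Fin K → 𝒵) {ℓ m c : ℕ} {σ : Fin ℓ → Fin m}
    (hσ : ∀ j, (σ j : ℕ) = c + j) (j0 : Fin K) :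
    cyclicPath z m j0 ∘ σ = cyclicPath z ℓ (j0 + Fin.ofNat K c) := by
  funext j
  simp only [cyclicPath, comp_apply, hσ, Fin.val_add, Fin.val_ofNat, Nat.mod_add_mod,
    Nat.add_mod_mod, add_assoc]

theorem stationary_map_cyclicPath [MeasurableSpace 𝒵] (z : Fin K → 𝒵) (n : ℕ) :
    Stationary (((K : ℝ≥0∞)⁻¹ • Measure.count).map (cyclicPath z (n + 1))) id := by
  have window : ∀ (ℓ c : ℕ) (σ : Fin ℓ → Fin (n + 1)), (∀ j, (σ j : ℕ) = c + j) →
      (((K : ℝ≥0∞)⁻¹ • Measure.count).map (cyclicPath z (n + 1))).map (fun w => w ∘ σ)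
        = ((K : ℝ≥0∞)⁻¹ • Measure.count).map (cyclicPath z ℓ) := by
    intro ℓ c σ hσ
    have hshift : (fun w => w ∘ σ) ∘ cyclicPath z (n + 1)
        = cyclicPath z ℓ ∘ (· + Fin.ofNat K c) :=
      funext (cyclicPath_comp_of_val_eq_add z hσ)
    rw [Measure.map_map (measurable_comp_right σ) .of_discrete, hshift,
      ← Measure.map_map (g := cyclicPath z ℓ) .of_discrete .of_discrete,
      map_add_right_eq_self]
  intro ℓ i hi
  exact (window ℓ i _ fun j => rfl).trans (window ℓ 0 _ fun j => (Nat.zero_add _).symm).symm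

end Cyclic

def lagIndex (n τ k : ℕ) (i : Fin (n + 1 - τ)) : Fin (n + 1) :=
  if i.val < k + 1 then ⟨i.val, by omega⟩ else ⟨i.val + τ, by omega⟩

theorem lagIndex_injective (n τ k : ℕ) : Injective (lagIndex n τ k) := by
  intro i j h
  have hi := i.isLt
  have hj := j.isLt
  unfold lagIndex at h
  split_ifs at h <;> simp only [Fin.mk.injEq] at h <;> omega

theorem betaMix_le_of_smul_pi_le {α : Type*} [MeasurableSpace α] {n : ℕ}
    {μ : Measure (Fin (n + 1) → α)} [IsProbabilityMeasure μ] {ν : Measure α}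
    [IsProbabilityMeasure ν] {q : ℝ≥0∞} (h : q • Measure.pi (fun _ => ν) ≤ μ) (τ : ℕ) :
    betaMix (μ.prod μ) n Prod.fst Prod.snd τ ≤ 1 - q.toReal ^ 2 := by
  have hq := Measure.toReal_le_one_of_smul_le h
  refine Real.iSup_le (fun k => ?_) (by nlinarith [ENNReal.toReal_nonneg (a := q)])
  let fU : Fin (n + 1 - τ) → Fin (n + 1) ⊕ Fin (n + 1) := fun i => .inl (lagIndex n τ k i)
  let fV : Fin (n + 1 - τ) → Fin (n + 1) ⊕ Fin (n + 1) := fun i =>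
    if i.val < k.val + 1 then .inl (lagIndex n τ k i) else .inr (lagIndex n τ k i)
  have hfU : Injective fU := Sum.inl_injective.comp (lagIndex_injective n τ k)
  have hfV : Injective fV := by
    intro i j hij
    simp only [fV] at hij
    split_ifs at hij <;> simpa using lagIndex_injective n τ k (by simpa using hij)
  convert dTV_le_of_smul_le (U := fun ω i => Sum.elim ω.1 ω.2 (fU i))
    (V := fun ω i => Sum.elim ω.1 ω.2 (fV i)) (measurable_sumElim_comp fU)
    (measurable_sumElim_comp fV) (Measure.smul_pi_le_map_sumElim h hfU)
    (Measure.smul_pi_le_map_sumElim h hfV) using 2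
  · funext ω i
    simp only [fU, lagIndex]
    split_ifs <;> rfl
  · funext ω i
    simp only [fV, lagIndex]
    split_ifs <;> rfl
  · rw [ENNReal.toReal_mul, sq]

theorem stmt17_general {𝒵 : Type*} [MeasurableSpace 𝒵] {n K : ℕ} (hK : 1 ≤ K)
    (z : Fin K → 𝒵) (b : ℝ) (hb0 : 0 ≤ b) (hb1 : b ≤ 1) :
    let Punif : Measure (Fin K) := (K : ℝ≥0∞)⁻¹ • Measure.count
    let Pcyc : Measure (Fin (n + 1) → 𝒵) :=
      Measure.map (fun j0 : Fin K => fun i : Fin (n + 1) =>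
        z ⟨(j0.val + i.val) % K, Nat.mod_lt _ hK⟩) Punif
    let Q : Measure 𝒵 := Measure.map z Punif
    let μ : Measure (Fin (n + 1) → 𝒵) :=
      ENNReal.ofReal (b / 4) • Pcyc
        + ENNReal.ofReal (1 - b / 4) • Measure.pi (fun _ : Fin (n + 1) => Q)
    Stationary μ (id : (Fin (n + 1) → 𝒵) → Fin (n + 1) → 𝒵) ∧
      ∀ τ : ℕ, betaMix (μ.prod μ) n Prod.fst Prod.snd τ ≤ 1 - (1 - b / 4) ^ 2 ∧
        1 - (1 - b / 4) ^ 2 ≤ b / 2 := by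
  intro Punif Pcyc Q μ
  have : NeZero K := ⟨by omega⟩
  have : IsProbabilityMeasure Punif := isProbabilityMeasure_uniform_fin K
  have : IsProbabilityMeasure Pcyc := Measure.isProbabilityMeasure_map .of_discrete
  have : IsProbabilityMeasure Q := Measure.isProbabilityMeasure_map .of_discrete
  have hweights : ENNReal.ofReal (b / 4) + ENNReal.ofReal (1 - b / 4) = 1 := by
    rw [← ENNReal.ofReal_add (by linarith) (by linarith)]
    norm_num
  have : IsProbabilityMeasure μ := isProbabilityMeasure_smul_add_smul hweights
  refine ⟨?_, fun τ => ⟨?_, by nlinarith⟩⟩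
  · exact ((stationary_map_cyclicPath z n).smul _).add measurable_id
      ((stationary_pi Q).smul _)
  · calc betaMix (μ.prod μ) n Prod.fst Prod.snd τ
        ≤ 1 - (ENNReal.ofReal (1 - b / 4)).toReal ^ 2 :=
          betaMix_le_of_smul_pi_le (Measure.le_add_left le_rfl) τ
      _ = 1 - (1 - b / 4) ^ 2 := by rw [ENNReal.toReal_ofReal (by linarith)]

/-- Mixture β-mixing bound for the lower-bound construction: the mixture of the uniform
cyclic process and the iid uniform process is stationary, with `β(τ) ≤ 1-(1-b/4)² ≤ b/2`. -/
theorem stmt17 {𝒵 : Type*} [MeasurableSpace 𝒵] {n K : ℕ} (hn : 1 ≤ n) (hK : 1 ≤ K)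
    (z : Fin K → 𝒵) (hz : Function.Injective z) (b : ℝ) (hb0 : 0 ≤ b) (hb1 : b ≤ 1) :
    let Punif : Measure (Fin K) := (K : ℝ≥0∞)⁻¹ • Measure.count
    let Pcyc : Measure (Fin (n + 1) → 𝒵) :=
      Measure.map (fun j0 : Fin K => fun i : Fin (n + 1) =>
        z ⟨(j0.val + i.val) % K, Nat.mod_lt _ hK⟩) Punif
    let Q : Measure 𝒵 := Measure.map z Punif
    let μ : Measure (Fin (n + 1) → 𝒵) :=
      ENNReal.ofReal (b / 4) • Pcyc
        + ENNReal.ofReal (1 - b / 4) • Measure.pi (fun _ : Fin (n + 1) => Q)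
    Stationary μ (id : (Fin (n + 1) → 𝒵) → Fin (n + 1) → 𝒵) ∧
      ∀ τ : ℕ, betaMix (μ.prod μ) n Prod.fst Prod.snd τ ≤ 1 - (1 - b / 4) ^ 2 ∧
        1 - (1 - b / 4) ^ 2 ≤ b / 2 :=
  stmt17_general hK z b hb0 hb1
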